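/- For the Jacobsthal and Jacobsthal–Lucas numbers and every natural number n ≥ 1, Σ_{i=0}^{n} J(i)²·K(n−i)·J(n−i) = J(n)·( (n−1)·J(n+1) + 2·(n+1)·J(n−1) ) / 9. -/

import Mathlib

noncomputable def jacR : ℕ → ℝ
  | 0 => 0
  | 1 => 1
  | n + 2 => jacR (n + 1) + 2 * jacR n

noncomputable def jacLucR : ℕ → ℝ
  | 0 => 2
  | 1 => 1
  | n + 2 => jacLucR (n + 1) + 2 * jacLucR n

/-!
Both sequences have Binet forms with roots `2` and `-1`, so `K(m) J(m) = (4^m - 1) / 3` and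
`J(i)^2 = (4^i - 2 (-2)^i + 1) / 9`. The convolution is then a sum of geometric-type terms in
`4`, `-2` and `1`, which is evaluated in closed form by induction on `n` using
`4^(n+1-i) - 1 = 4 (4^(n-i) - 1) + 3`.
-/

open Finset

theorem jacR_eq : ∀ k, jacR k = ((2 : ℝ) ^ k - (-1) ^ k) / 3
  | 0 => by norm_num [jacR]
  | 1 => by norm_num [jacR]
  | k + 2 => by
    rw [jacR, jacR_eq (k + 1), jacR_eq k]
    ring

theorem jacLucR_eq : ∀ k, jacLucR k = (2 : ℝ) ^ k + (-1) ^ k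
  | 0 => by norm_num [jacLucR]
  | 1 => by norm_num [jacLucR]
  | k + 2 => by
    rw [jacLucR, jacLucR_eq (k + 1), jacLucR_eq k]
    ring

theorem neg_one_pow_mul_neg_one_pow (k : ℕ) : (-1 : ℝ) ^ k * (-1) ^ k = 1 :=
  pow_mul_pow_eq_one k (by norm_num)

theorem four_pow_eq (k : ℕ) : (4 : ℝ) ^ k = 2 ^ k * 2 ^ k := by
  rw [← mul_pow]; norm_num

theorem neg_two_pow_eq (k : ℕ) : (-2 : ℝ) ^ k = 2 ^ k * (-1) ^ k := by
  rw [← mul_pow]; norm_num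

theorem jacLucR_mul_jacR (m : ℕ) : jacLucR m * jacR m = ((4 : ℝ) ^ m - 1) / 3 := by
  rw [jacR_eq, jacLucR_eq, four_pow_eq]
  linear_combination (-1 / 3 : ℝ) * neg_one_pow_mul_neg_one_pow m

theorem jacR_sq (k : ℕ) : jacR k ^ 2 = ((4 : ℝ) ^ k - 2 * (-2) ^ k + 1) / 9 := by
  rw [jacR_eq, four_pow_eq, neg_two_pow_eq]
  linear_combination (1 / 9 : ℝ) * neg_one_pow_mul_neg_one_pow k

theorem sum_range_jacR_sq (n : ℕ) :
    ∑ i ∈ range (n + 1), jacR i ^ 2 =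
      ((4 : ℝ) ^ (n + 1) - 1) / 27 - 2 * (1 - (-2) ^ (n + 1)) / 27 + ((n : ℝ) + 1) / 9 := by
  induction n with
  | zero => norm_num [jacR]
  | succ n ih =>
    rw [sum_range_succ, ih, jacR_sq]
    push_cast
    ring

theorem sum_range_succ_mul_four_pow_sub_one {R : Type*} [CommRing R] (f : ℕ → R) (n : ℕ) :
    ∑ i ∈ range (n + 2), f i * (4 ^ (n + 1 - i) - 1) =
      4 * ∑ i ∈ range (n + 1), f i * (4 ^ (n - i) - 1) + 3 * ∑ i ∈ range (n + 1), f i := by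
  have hterm : ∀ i ∈ range (n + 1),
      f i * (4 ^ (n + 1 - i) - 1) = 4 * (f i * (4 ^ (n - i) - 1)) + 3 * f i := by
    intro i hi
    rw [Nat.sub_add_comm (mem_range_succ_iff.mp hi), pow_succ]
    ring
  rw [sum_range_succ, sum_congr rfl hterm, sum_add_distrib, ← mul_sum, ← mul_sum]
  simp

theorem sum_range_jacR_sq_mul_four_pow_sub_one (n : ℕ) :
    ∑ i ∈ range (n + 1), jacR i ^ 2 * ((4 : ℝ) ^ (n - i) - 1) =
      ((n : ℝ) + 1) * (4 ^ n - 1) / 9 + (2 - 4 * 4 ^ n + 2 * (-2) ^ n) / 27 := by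
  induction n with
  | zero => norm_num [jacR]
  | succ n ih =>
    rw [sum_range_succ_mul_four_pow_sub_one, ih, sum_range_jacR_sq]
    push_cast
    ring

theorem jacobsthal_product_convolution_general (n : ℕ) :
    ∑ i ∈ Finset.range (n + 1), jacR i ^ 2 * jacLucR (n - i) * jacR (n - i) =
      jacR n * (((n : ℝ) - 1) * jacR (n + 1) + 2 * ((n : ℝ) + 1) * jacR (n - 1)) / 9 := by
  simp_rw [mul_assoc, jacLucR_mul_jacR, ← mul_div_assoc, ← sum_div,
    sum_range_jacR_sq_mul_four_pow_sub_one]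
  cases n with
  | zero => norm_num [jacR]
  | succ m =>
    rw [Nat.add_sub_cancel, jacR_eq (m + 1), jacR_eq (m + 1 + 1), jacR_eq m]
    simp only [pow_succ, four_pow_eq, neg_two_pow_eq]
    push_cast
    linear_combination ((3 * m + 4) / 81 : ℝ) * neg_one_pow_mul_neg_one_pow m

theorem jacobsthal_product_convolution (n : ℕ) (hn : 1 ≤ n) :
    ∑ i ∈ Finset.range (n + 1), jacR i ^ 2 * jacLucR (n - i) * jacR (n - i) =
      jacR n * (((n : ℝ) - 1) * jacR (n + 1) + 2 * ((n : ℝ) + 1) * jacR (n - 1)) / 9 :=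
  jacobsthal_product_convolution_general n
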